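/- Let n ≥ 1, m ≥ 1, and for each player j ∈ {1,…,n} let u_j : {0,1,…,m} → ℝ be any function. Fix a player i and let ū_i : {0,1,…,m} → ℝ satisfy ū_i(s̄) − ū_i(s) ≥ u_i(s̄) − u_i(s) for all s̄ > s in {0,…,m}. Let ≻_T be a strict total order on the (finite) set of allocations of m items among n players. Let s = (s_1,…,s_n) be the ≻_T-greatest element among the allocations maximizing u_i(s_i) + Σ_{j≠i} u_j(s_j), and let s̄ = (s̄_1,…,s̄_n) be the ≻_T-greatest element among the allocations maximizing ū_i(s̄_i) + Σ_{j≠i} u_j(s̄_j). Then s̄_i ≥ s_i. -/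
import Mathlib


/-- Welfare maximization with a fixed tie-breaking order is
monotone for a player whose valuation improves in the single-crossing
(marginal-dominance) sense: if `s` is the `≻_T`-greatest welfare maximizer for
`(u_i, u_{-i})` and `s̄` is the `≻_T`-greatest welfare maximizer for
`(ū_i, u_{-i})`, where `ū_i(s̄) − ū_i(s) ≥ u_i(s̄) − u_i(s)` whenever `s̄ > s`,
then `s̄_i ≥ s_i`. -/
theorem tie_breaking_welfare_maximization_monotone
    (n m : ℕ) (hn : 1 ≤ n) (hm : 1 ≤ m)
    (u : Fin n → ℕ → ℝ) (i : Fin n) (ub : ℕ → ℝ)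
    (hdom : ∀ s t : ℕ, s < t → t ≤ m → u i t - u i s ≤ ub t - ub s)
    (r : {s : Fin n → ℕ // ∑ j, s j ≤ m} → {s : Fin n → ℕ // ∑ j, s j ≤ m} → Prop)
    (hr : IsStrictTotalOrder {s : Fin n → ℕ // ∑ j, s j ≤ m} r)
    (s sb : {s : Fin n → ℕ // ∑ j, s j ≤ m})
    (hsmax : ∀ t : {s : Fin n → ℕ // ∑ j, s j ≤ m},
      u i (t.1 i) + ∑ j ∈ Finset.univ.erase i, u j (t.1 j) ≤
        u i (s.1 i) + ∑ j ∈ Finset.univ.erase i, u j (s.1 j))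
    (hsgreat : ∀ t : {s : Fin n → ℕ // ∑ j, s j ≤ m},
      u i (t.1 i) + ∑ j ∈ Finset.univ.erase i, u j (t.1 j) =
        u i (s.1 i) + ∑ j ∈ Finset.univ.erase i, u j (s.1 j) → t ≠ s → r s t)
    (hsbmax : ∀ t : {s : Fin n → ℕ // ∑ j, s j ≤ m},
      ub (t.1 i) + ∑ j ∈ Finset.univ.erase i, u j (t.1 j) ≤
        ub (sb.1 i) + ∑ j ∈ Finset.univ.erase i, u j (sb.1 j))
    (hsbgreat : ∀ t : {s : Fin n → ℕ // ∑ j, s j ≤ m},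
      ub (t.1 i) + ∑ j ∈ Finset.univ.erase i, u j (t.1 j) =
        ub (sb.1 i) + ∑ j ∈ Finset.univ.erase i, u j (sb.1 j) → t ≠ sb → r sb t) :
    s.1 i ≤ sb.1 i := by
  by_contra hlt
  push_neg at hlt
  have hsm : s.1 i ≤ m := le_trans (Finset.single_le_sum (f := s.1)
    (fun j _ => Nat.zero_le _) (Finset.mem_univ i)) s.2
  have hd := hdom (sb.1 i) (s.1 i) hlt hsm
  have h1 := hsmax sb
  have h2 := hsbmax s
  have heq1 : u i (sb.1 i) + ∑ j ∈ Finset.univ.erase i, u j (sb.1 j) =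
      u i (s.1 i) + ∑ j ∈ Finset.univ.erase i, u j (s.1 j) := by linarith
  have heq2 : ub (s.1 i) + ∑ j ∈ Finset.univ.erase i, u j (s.1 j) =
      ub (sb.1 i) + ∑ j ∈ Finset.univ.erase i, u j (sb.1 j) := by linarith
  have hne : sb ≠ s := by
    intro h; rw [h] at hlt; exact lt_irrefl _ hlt
  have hr1 := hsgreat sb heq1 hne
  have hr2 := hsbgreat s heq2 (Ne.symm hne)
  exact hr.irrefl s (hr.trans _ _ _ hr1 hr2)
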